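/- Let K : H → H be adjointable, let (T_ω)_{ω∈Ω} be an integral K-operator frame for H with bounds A, B > 0, let (Γ_ω)_{ω∈Ω} be a family of adjointable operators on H, and let (a_ω)_{ω∈Ω}, (b_ω)_{ω∈Ω} be positively confined families of real numbers (i.e. 0 < inf_ω a_ω ≤ sup_ω a_ω < ∞ and 0 < inf_ω b_ω ≤ sup_ω b_ω < ∞). Suppose there exist constants α, β with 0 ≤ α < 1/2 and 0 ≤ β < 1/2 such that for all x ∈ H, ∫_Ω ⟨a_ω T_ω x − b_ω Γ_ω x, a_ω T_ω x − b_ω Γ_ω x⟩ dμ(ω) ≤ α·∫_Ω ⟨a_ω T_ω x, a_ω T_ω x⟩ dμ(ω) + β·∫_Ω ⟨b_ω Γ_ω x, b_ω Γ_ω x⟩ dμ(ω). Then (Γ_ω)_{ω∈Ω} is an integral K-operator frame for H, with lower bound ((1−2α)·(inf_ω a_ω)² / (2(1+β)·(sup_ω b_ω)²))·A and upper bound (2(1+α)·(sup_ω a_ω)² / ((1−2β)·(inf_ω b_ω)²))·B. -/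

import Mathlib

/-!
Put `P = ∫ ⟪c T x, c T x⟫`, `Q = ∫ ⟪d G x, d G x⟫` and `R = ∫ ⟪c T x - d G x, ⋯⟫`. The
parallelogram law gives `P ≤ 2 R + 2 Q` and `Q ≤ 2 R + 2 P`; inserting `R ≤ α P + β Q` yields
`(1 - 2α) P ≤ 2(1 + β) Q` and `(1 - 2β) Q ≤ 2(1 + α) P`. Since `c` and `d` are confined,
`P` and `Q` are comparable to `∫ ⟪T x, T x⟫` and `∫ ⟪G x, G x⟫`, and the frame bounds of `T`
transfer to `G`.
-/

open MeasureTheory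

variable {A : Type*} [CStarAlgebra A] [PartialOrder A] [StarOrderedRing A]
variable {H : Type*} [NormedAddCommGroup H] [NormedSpace ℂ H] [SMul A H] [CStarModule A H]
variable {Ω : Type*} [MeasurableSpace Ω]

local notation "⟪" x ", " y "⟫" => inner (𝕜 := A) x y

/-- `S` is an adjoint of `T` on the Hilbert `A`-module `H`:
`⟪T x, y⟫ = ⟪x, S y⟫` for all `x y`. -/
def IsAdjointOp (T S : H →L[ℂ] H) : Prop :=
  ∀ x y : H, ⟪T x, y⟫ = ⟪x, S y⟫

/-- `(T ω)` is an integral `K`-operator frame with bounds `a`, `b`, where `Ks`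
denotes the adjoint `K*` of `K`. -/
def IsIntegralKOpFrameWith (μ : Measure Ω) (Ks : H →L[ℂ] H)
    (T : Ω → H →L[ℂ] H) (a b : ℝ) : Prop :=
  0 < a ∧ 0 < b ∧ ∀ x : H,
    Integrable (fun ω => ⟪T ω x, T ω x⟫) μ ∧
    a • ⟪Ks x, Ks x⟫ ≤ ∫ ω, ⟪T ω x, T ω x⟫ ∂μ ∧
    ∫ ω, ⟪T ω x, T ω x⟫ ∂μ ≤ b • ⟪x, x⟫

/-- `(T ω)` is an integral operator frame with bounds `a`, `b`. -/
def IsIntegralOpFrameWith (μ : Measure Ω) (T : Ω → H →L[ℂ] H) (a b : ℝ) : Prop :=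
  0 < a ∧ 0 < b ∧ ∀ x : H,
    Integrable (fun ω => ⟪T ω x, T ω x⟫) μ ∧
    a • ⟪x, x⟫ ≤ ∫ ω, ⟪T ω x, T ω x⟫ ∂μ ∧
    ∫ ω, ⟪T ω x, T ω x⟫ ∂μ ≤ b • ⟪x, x⟫

namespace CStarModule

omit [StarOrderedRing A] in
lemma inner_smul_smul_self_real (t : ℝ) (x : H) : ⟪t • x, t • x⟫ = t ^ 2 • ⟪x, x⟫ := by
  rw [inner_smul_left_real, inner_smul_right_real, smul_smul, sq]

omit [StarOrderedRing A] in
lemma inner_self_add_add_inner_self_sub (x y : H) :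
    ⟪x + y, x + y⟫ + ⟪x - y, x - y⟫ = (2 : ℝ) • ⟪x, x⟫ + (2 : ℝ) • ⟪y, y⟫ := by
  simp only [inner_add_left, inner_add_right, inner_sub_left, inner_sub_right, two_smul]
  abel

lemma inner_self_add_le (x y : H) :
    ⟪x + y, x + y⟫ ≤ (2 : ℝ) • ⟪x, x⟫ + (2 : ℝ) • ⟪y, y⟫ :=
  inner_self_add_add_inner_self_sub (A := A) x y ▸
    le_add_of_nonneg_right (inner_self_nonneg (A := A))

lemma inner_self_sub_le (x y : H) :
    ⟪x - y, x - y⟫ ≤ (2 : ℝ) • ⟪x, x⟫ + (2 : ℝ) • ⟪y, y⟫ :=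
  inner_self_add_add_inner_self_sub (A := A) x y ▸
    le_add_of_nonneg_left (inner_self_nonneg (A := A))

end CStarModule

section OrderedModule

variable {E : Type*} [AddCommGroup E] [PartialOrder E] [Module ℝ E] [PosSMulMono ℝ E]

lemma one_sub_two_mul_smul_le_of_le_two_smul_add [IsOrderedAddMonoid E] {α β : ℝ} {P Q R : E}
    (hP : P ≤ (2 : ℝ) • R + (2 : ℝ) • Q) (hR : R ≤ α • P + β • Q) :
    (1 - 2 * α) • P ≤ (2 * (1 + β)) • Q := by
  have h := hP.trans (add_le_add_left (smul_le_smul_of_nonneg_left hR zero_le_two) _)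
  rw [← sub_nonneg] at h ⊢
  convert h using 1
  module

variable [PosSMulReflectLE ℝ E]

lemma div_mul_smul_le_of_smul_le {r s a : ℝ} {x y : E} (hs : 0 < s) (h : r • a • x ≤ s • y) :
    (r / s * a) • x ≤ y := by
  rwa [div_mul_eq_mul_div, div_eq_inv_mul, mul_smul, inv_smul_le_iff_of_pos hs, mul_smul]

lemma le_div_mul_smul_of_smul_le {r s b : ℝ} {x y : E} (hs : 0 < s) (h : s • y ≤ r • b • x) :
    y ≤ (r / s * b) • x := by
  rwa [div_mul_eq_mul_div, div_eq_inv_mul, mul_smul, le_inv_smul_iff_of_pos hs, mul_smul]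

end OrderedModule

section Confined

variable {ι : Type*} {f : ι → ℝ}

lemma ciInf_le_of_ciInf_pos (hf : 0 < ⨅ i, f i) (i : ι) : ⨅ i, f i ≤ f i := by
  refine ciInf_le ?_ i
  by_contra hbdd
  rw [Real.iInf_of_not_bddBelow hbdd] at hf
  exact hf.false

lemma ciSup_pos_of_ciInf_pos (hf : 0 < ⨅ i, f i) (hf' : BddAbove (Set.range f)) :
    0 < ⨆ i, f i := by
  rcases isEmpty_or_nonempty ι with hι | ⟨⟨i⟩⟩
  · simp at hf
  · exact hf.trans_le ((ciInf_le_of_ciInf_pos hf i).trans (le_ciSup hf' i))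

end Confined

section Integral

variable {μ : Measure Ω}

lemma ciInf_sq_smul_integral_inner_le {c : Ω → ℝ} {v : Ω → H} (hc : 0 < ⨅ ω, c ω)
    (hv : Integrable (fun ω => ⟪v ω, v ω⟫) μ)
    (hcv : Integrable (fun ω => ⟪c ω • v ω, c ω • v ω⟫) μ) :
    (⨅ ω, c ω) ^ 2 • ∫ ω, ⟪v ω, v ω⟫ ∂μ ≤ ∫ ω, ⟪c ω • v ω, c ω • v ω⟫ ∂μ := by
  rw [← integral_smul]
  refine integral_mono (hv.smul _) hcv fun ω => ?_
  rw [CStarModule.inner_smul_smul_self_real]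
  exact smul_le_smul_of_nonneg_right (pow_le_pow_left₀ hc.le (ciInf_le_of_ciInf_pos hc ω) 2)
    CStarModule.inner_self_nonneg

lemma integral_inner_le_ciSup_sq_smul {c : Ω → ℝ} {v : Ω → H} (hc : 0 < ⨅ ω, c ω)
    (hc' : BddAbove (Set.range c)) (hv : Integrable (fun ω => ⟪v ω, v ω⟫) μ)
    (hcv : Integrable (fun ω => ⟪c ω • v ω, c ω • v ω⟫) μ) :
    ∫ ω, ⟪c ω • v ω, c ω • v ω⟫ ∂μ ≤ (⨆ ω, c ω) ^ 2 • ∫ ω, ⟪v ω, v ω⟫ ∂μ := by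
  rw [← integral_smul]
  refine integral_mono hcv (hv.smul _) fun ω => ?_
  rw [CStarModule.inner_smul_smul_self_real]
  have hcω : 0 ≤ c ω := (hc.trans_le (ciInf_le_of_ciInf_pos hc ω)).le
  exact smul_le_smul_of_nonneg_right (pow_le_pow_left₀ hcω (le_ciSup hc' ω) 2)
    CStarModule.inner_self_nonneg

lemma integral_inner_self_le_of_perturbation {p q : Ω → H} {α β : ℝ}
    (hpq : Integrable (fun ω => ⟪p ω - q ω, p ω - q ω⟫) μ)
    (hp : Integrable (fun ω => ⟪p ω, p ω⟫) μ) (hq : Integrable (fun ω => ⟪q ω, q ω⟫) μ)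
    (hper : ∫ ω, ⟪p ω - q ω, p ω - q ω⟫ ∂μ ≤
      α • ∫ ω, ⟪p ω, p ω⟫ ∂μ + β • ∫ ω, ⟪q ω, q ω⟫ ∂μ) :
    (1 - 2 * α) • ∫ ω, ⟪p ω, p ω⟫ ∂μ ≤ (2 * (1 + β)) • ∫ ω, ⟪q ω, q ω⟫ ∂μ ∧
      (1 - 2 * β) • ∫ ω, ⟪q ω, q ω⟫ ∂μ ≤ (2 * (1 + α)) • ∫ ω, ⟪p ω, p ω⟫ ∂μ := by
  have h2pq : Integrable (fun ω => (2 : ℝ) • ⟪p ω - q ω, p ω - q ω⟫) μ := hpq.smul 2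
  have h2p : Integrable (fun ω => (2 : ℝ) • ⟪p ω, p ω⟫) μ := hp.smul 2
  have h2q : Integrable (fun ω => (2 : ℝ) • ⟪q ω, q ω⟫) μ := hq.smul 2
  constructor
  · refine one_sub_two_mul_smul_le_of_le_two_smul_add ?_ hper
    rw [← integral_smul, ← integral_smul, ← integral_add h2pq h2q]
    refine integral_mono hp (h2pq.add h2q) fun ω => ?_
    simpa using CStarModule.inner_self_add_le (A := A) (p ω - q ω) (q ω)
  · refine one_sub_two_mul_smul_le_of_le_two_smul_add ?_ (hper.trans_eq (add_comm _ _))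
    rw [← integral_smul, ← integral_smul, ← integral_add h2pq h2p]
    refine integral_mono hq (h2pq.add h2p) fun ω => ?_
    have h := CStarModule.inner_self_sub_le (A := A) (p ω) (p ω - q ω)
    rwa [sub_sub_cancel, add_comm] at h

lemma integral_inner_comparison_of_perturbation {u v : Ω → H} {c d : Ω → ℝ} {α β : ℝ}
    (hc : 0 < ⨅ ω, c ω) (hc' : BddAbove (Set.range c))
    (hd : 0 < ⨅ ω, d ω) (hd' : BddAbove (Set.range d))
    (hu : Integrable (fun ω => ⟪u ω, u ω⟫) μ) (hv : Integrable (fun ω => ⟪v ω, v ω⟫) μ)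
    (hcudv : Integrable (fun ω => ⟪c ω • u ω - d ω • v ω, c ω • u ω - d ω • v ω⟫) μ)
    (hcu : Integrable (fun ω => ⟪c ω • u ω, c ω • u ω⟫) μ)
    (hdv : Integrable (fun ω => ⟪d ω • v ω, d ω • v ω⟫) μ)
    (hα₀ : 0 ≤ α) (hα : α ≤ 1 / 2) (hβ₀ : 0 ≤ β) (hβ : β ≤ 1 / 2)
    (hper : ∫ ω, ⟪c ω • u ω - d ω • v ω, c ω • u ω - d ω • v ω⟫ ∂μ ≤
      α • ∫ ω, ⟪c ω • u ω, c ω • u ω⟫ ∂μ + β • ∫ ω, ⟪d ω • v ω, d ω • v ω⟫ ∂μ) :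
    ((1 - 2 * α) * (⨅ ω, c ω) ^ 2) • ∫ ω, ⟪u ω, u ω⟫ ∂μ ≤
        (2 * (1 + β) * (⨆ ω, d ω) ^ 2) • ∫ ω, ⟪v ω, v ω⟫ ∂μ ∧
      ((1 - 2 * β) * (⨅ ω, d ω) ^ 2) • ∫ ω, ⟪v ω, v ω⟫ ∂μ ≤
        (2 * (1 + α) * (⨆ ω, c ω) ^ 2) • ∫ ω, ⟪u ω, u ω⟫ ∂μ := by
  obtain ⟨hPQ, hQP⟩ := integral_inner_self_le_of_perturbation hcudv hcu hdv hper
  constructor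
  · calc _ = (1 - 2 * α) • (⨅ ω, c ω) ^ 2 • ∫ ω, ⟪u ω, u ω⟫ ∂μ := mul_smul ..
      _ ≤ (1 - 2 * α) • ∫ ω, ⟪c ω • u ω, c ω • u ω⟫ ∂μ := by
        gcongr
        · linarith
        · exact ciInf_sq_smul_integral_inner_le hc hu hcu
      _ ≤ (2 * (1 + β)) • ∫ ω, ⟪d ω • v ω, d ω • v ω⟫ ∂μ := hPQ
      _ ≤ (2 * (1 + β)) • (⨆ ω, d ω) ^ 2 • ∫ ω, ⟪v ω, v ω⟫ ∂μ := by
        gcongr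
        exact integral_inner_le_ciSup_sq_smul hd hd' hv hdv
      _ = _ := (mul_smul ..).symm
  · calc _ = (1 - 2 * β) • (⨅ ω, d ω) ^ 2 • ∫ ω, ⟪v ω, v ω⟫ ∂μ := mul_smul ..
      _ ≤ (1 - 2 * β) • ∫ ω, ⟪d ω • v ω, d ω • v ω⟫ ∂μ := by
        gcongr
        · linarith
        · exact ciInf_sq_smul_integral_inner_le hd hv hdv
      _ ≤ (2 * (1 + α)) • ∫ ω, ⟪c ω • u ω, c ω • u ω⟫ ∂μ := hQP
      _ ≤ (2 * (1 + α)) • (⨆ ω, c ω) ^ 2 • ∫ ω, ⟪u ω, u ω⟫ ∂μ := by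
        gcongr
        exact integral_inner_le_ciSup_sq_smul hc hc' hu hcu
      _ = _ := (mul_smul ..).symm

end Integral

theorem integralKOpFrame_of_perturbation_general
    (μ : Measure Ω) (Ks : H →L[ℂ] H)
    (T G : Ω → H →L[ℂ] H) (a b : ℝ)
    (hframe : IsIntegralKOpFrameWith (A := A) μ Ks T a b)
    (c d : Ω → ℝ)
    (hc0 : 0 < ⨅ ω, c ω) (hcbdd : BddAbove (Set.range c))
    (hd0 : 0 < ⨅ ω, d ω) (hdbdd : BddAbove (Set.range d))
    (hGint : ∀ x : H, Integrable (fun ω => ⟪G ω x, G ω x⟫) μ)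
    (hint1 : ∀ x : H, Integrable
      (fun ω => ⟪c ω • T ω x - d ω • G ω x, c ω • T ω x - d ω • G ω x⟫) μ)
    (hint2 : ∀ x : H, Integrable (fun ω => ⟪c ω • T ω x, c ω • T ω x⟫) μ)
    (hint3 : ∀ x : H, Integrable (fun ω => ⟪d ω • G ω x, d ω • G ω x⟫) μ)
    (α β : ℝ) (hα0 : 0 ≤ α) (hα : α < 1 / 2) (hβ0 : 0 ≤ β) (hβ : β < 1 / 2)
    (hper : ∀ x : H,
      ∫ ω, ⟪c ω • T ω x - d ω • G ω x, c ω • T ω x - d ω • G ω x⟫ ∂μ ≤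
        α • ∫ ω, ⟪c ω • T ω x, c ω • T ω x⟫ ∂μ +
          β • ∫ ω, ⟪d ω • G ω x, d ω • G ω x⟫ ∂μ) :
    IsIntegralKOpFrameWith (A := A) μ Ks G
      ((1 - 2 * α) * (⨅ ω, c ω) ^ 2 / (2 * (1 + β) * (⨆ ω, d ω) ^ 2) * a)
      (2 * (1 + α) * (⨆ ω, c ω) ^ 2 / ((1 - 2 * β) * (⨅ ω, d ω) ^ 2) * b) := by
  obtain ⟨ha, hb, hT⟩ := hframe
  have hα' : 0 < 1 - 2 * α := by linarith
  have hβ' : 0 < 1 - 2 * β := by linarith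
  have hcM := ciSup_pos_of_ciInf_pos hc0 hcbdd
  have hdM := ciSup_pos_of_ciInf_pos hd0 hdbdd
  refine ⟨by positivity, by positivity, fun x => ?_⟩
  obtain ⟨hTx, hTlow, hTup⟩ := hT x
  obtain ⟨hTG, hGT⟩ := integral_inner_comparison_of_perturbation hc0 hcbdd hd0 hdbdd hTx
    (hGint x) (hint1 x) (hint2 x) (hint3 x) hα0 hα.le hβ0 hβ.le (hper x)
  refine ⟨hGint x, div_mul_smul_le_of_smul_le (by positivity) ?_,
    le_div_mul_smul_of_smul_le (by positivity) ?_⟩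
  · exact (smul_le_smul_of_nonneg_left hTlow (by positivity)).trans hTG
  · exact hGT.trans (smul_le_smul_of_nonneg_left hTup (by positivity))

/-- if `(T ω)` is an integral `K`-operator frame with bounds `a`, `b`,
`(c ω)`, `(d ω)` are positively confined real families and
`∫ ⟪c ω • T ω x − d ω • G ω x, ⋯⟫ ≤ α ∫ ⟪c ω • T ω x, ⋯⟫ + β ∫ ⟪d ω • G ω x, ⋯⟫`
for some `0 ≤ α, β < 1/2`, then `(G ω)` is an integral `K`-operator frame with the
indicated bounds. -/
theorem integralKOpFrame_of_perturbation
    (μ : Measure Ω) (K Ks : H →L[ℂ] H) (hK : IsAdjointOp (A := A) K Ks)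
    (T G : Ω → H →L[ℂ] H) (a b : ℝ)
    (hframe : IsIntegralKOpFrameWith (A := A) μ Ks T a b)
    (c d : Ω → ℝ)
    (hc0 : 0 < ⨅ ω, c ω) (hcbdd : BddAbove (Set.range c))
    (hd0 : 0 < ⨅ ω, d ω) (hdbdd : BddAbove (Set.range d))
    (hGint : ∀ x : H, Integrable (fun ω => ⟪G ω x, G ω x⟫) μ)
    (hint1 : ∀ x : H, Integrable
      (fun ω => ⟪c ω • T ω x - d ω • G ω x, c ω • T ω x - d ω • G ω x⟫) μ)
    (hint2 : ∀ x : H, Integrable (fun ω => ⟪c ω • T ω x, c ω • T ω x⟫) μ)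
    (hint3 : ∀ x : H, Integrable (fun ω => ⟪d ω • G ω x, d ω • G ω x⟫) μ)
    (α β : ℝ) (hα0 : 0 ≤ α) (hα : α < 1 / 2) (hβ0 : 0 ≤ β) (hβ : β < 1 / 2)
    (hper : ∀ x : H,
      ∫ ω, ⟪c ω • T ω x - d ω • G ω x, c ω • T ω x - d ω • G ω x⟫ ∂μ ≤
        α • ∫ ω, ⟪c ω • T ω x, c ω • T ω x⟫ ∂μ +
          β • ∫ ω, ⟪d ω • G ω x, d ω • G ω x⟫ ∂μ) :
    IsIntegralKOpFrameWith (A := A) μ Ks G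
      ((1 - 2 * α) * (⨅ ω, c ω) ^ 2 / (2 * (1 + β) * (⨆ ω, d ω) ^ 2) * a)
      (2 * (1 + α) * (⨆ ω, c ω) ^ 2 / ((1 - 2 * β) * (⨅ ω, d ω) ^ 2) * b) :=
  integralKOpFrame_of_perturbation_general μ Ks T G a b hframe c d hc0 hcbdd hd0 hdbdd hGint hint1
    hint2 hint3 α β hα0 hα hβ0 hβ hper
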